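/- Let p₁, p₂ be finitely supported probability distributions over multiplicities and define their sum (p₁ ⊕ p₂)(m) = ∑_{m = m₁ ⊕ m₂} p₁(m₁)·p₂(m₂). Then for every process distance e, pda(p₁ ⊕ p₂, e) = pda(p₁,e) + pda(p₂,e) - pda(p₁,e)·pda(p₂,e); in particular pda(p₁ ⊕ p₂, e) ≤ pda(p₁,e) + pda(p₂,e). -/

import Mathlib

/-- Deterministic distance approximation from above. -/
noncomputable def dda {V : Type*} (m : V →₀ ℕ) (e : V → ℝ) : ℝ :=
  1 - ∏ x ∈ m.support, (1 - e x) ^ (m x)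

/-- Probabilistic distance approximation from above. -/
noncomputable def pda {V : Type*} (p : (V →₀ ℕ) →₀ ℝ) (e : V → ℝ) : ℝ :=
  ∑ m ∈ p.support, p m * dda m e

/-- Convolution of distributions over multiplicities along pointwise sum. -/
noncomputable def convSum {V : Type*} (p₁ p₂ : (V →₀ ℕ) →₀ ℝ) : (V →₀ ℕ) →₀ ℝ :=
  p₁.sum fun m₁ w₁ => p₂.sum fun m₂ w₂ => Finsupp.single (m₁ + m₂) (w₁ * w₂)

/-!
Both `m ↦ 1` and `m ↦ 1 - dda m e = ∏ₓ (1 - e x) ^ m x` turn `⊕` into multiplication, and the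
expectation of such a function under `p₁ ⊕ p₂` is the product of its expectations under `p₁` and
`p₂`. Hence `p₁ ⊕ p₂` is again a probability distribution and
`1 - pda (p₁ ⊕ p₂) e = (1 - pda p₁ e) * (1 - pda p₂ e)`. The inequality follows since `pda ≥ 0`.
-/

section

variable {V : Type*}

noncomputable def expect (p : (V →₀ ℕ) →₀ ℝ) (f : (V →₀ ℕ) → ℝ) : ℝ :=
  p.sum fun m w => w * f m

theorem expect_convSum_of_map_add {f : (V →₀ ℕ) → ℝ}
    (hf : ∀ m₁ m₂, f (m₁ + m₂) = f m₁ * f m₂) (p₁ p₂ : (V →₀ ℕ) →₀ ℝ) :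
    expect (convSum p₁ p₂) f = expect p₁ f * expect p₂ f := by
  have h_zero : ∀ m, (0 : ℝ) * f m = 0 := fun _ => zero_mul _
  have h_add : ∀ m (w₁ w₂ : ℝ), (w₁ + w₂) * f m = w₁ * f m + w₂ * f m := fun _ _ _ => add_mul _ _ _
  rw [expect, convSum, Finsupp.sum_sum_index h_zero h_add, expect, expect, Finsupp.sum_mul]
  refine Finsupp.sum_congr fun m₁ _ => ?_
  rw [Finsupp.sum_sum_index h_zero h_add, Finsupp.mul_sum]
  refine Finsupp.sum_congr fun m₂ _ => ?_
  rw [Finsupp.sum_single_index (h_zero _), hf]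
  ring

theorem expect_one (p : (V →₀ ℕ) →₀ ℝ) : expect p (fun _ => 1) = ∑ m ∈ p.support, p m := by
  simp only [expect, mul_one, Finsupp.sum]

theorem sum_convSum (p₁ p₂ : (V →₀ ℕ) →₀ ℝ) :
    ∑ m ∈ (convSum p₁ p₂).support, convSum p₁ p₂ m =
      (∑ m ∈ p₁.support, p₁ m) * ∑ m ∈ p₂.support, p₂ m := by
  simpa only [expect_one] using expect_convSum_of_map_add (f := fun _ => 1) (fun _ _ => (one_mul 1).symm) p₁ p₂

theorem one_sub_dda_add (m₁ m₂ : V →₀ ℕ) (e : V → ℝ) :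
    1 - dda (m₁ + m₂) e = (1 - dda m₁ e) * (1 - dda m₂ e) := by
  simp only [dda, sub_sub_cancel]
  exact Finsupp.prod_add_index' (fun _ => pow_zero _) fun _ => pow_add _

theorem one_sub_pda {p : (V →₀ ℕ) →₀ ℝ} (hp : ∑ m ∈ p.support, p m = 1) (e : V → ℝ) :
    1 - pda p e = expect p fun m => 1 - dda m e := by
  simp only [expect, Finsupp.sum, mul_one_sub, Finset.sum_sub_distrib, hp, pda]

theorem dda_nonneg (m : V →₀ ℕ) {e : V → ℝ} (he0 : ∀ x, 0 ≤ e x) (he1 : ∀ x, e x ≤ 1) :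
    0 ≤ dda m e :=
  sub_nonneg.mpr <| Finset.prod_le_one (fun x _ => pow_nonneg (sub_nonneg.mpr (he1 x)) _)
    fun x _ => pow_le_one₀ (sub_nonneg.mpr (he1 x)) (sub_le_self _ (he0 x))

theorem pda_nonneg {p : (V →₀ ℕ) →₀ ℝ} (hp : ∀ m, 0 ≤ p m) {e : V → ℝ}
    (he0 : ∀ x, 0 ≤ e x) (he1 : ∀ x, e x ≤ 1) : 0 ≤ pda p e :=
  Finset.sum_nonneg fun m _ => mul_nonneg (hp m) (dda_nonneg m he0 he1)

end

theorem pda_convSum {V : Type*}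
    (p₁ p₂ : (V →₀ ℕ) →₀ ℝ)
    (hp₁0 : ∀ m, 0 ≤ p₁ m) (hp₁1 : ∑ m ∈ p₁.support, p₁ m = 1)
    (hp₂0 : ∀ m, 0 ≤ p₂ m) (hp₂1 : ∑ m ∈ p₂.support, p₂ m = 1)
    (e : V → ℝ) (he0 : ∀ x, 0 ≤ e x) (he1 : ∀ x, e x < 1) :
    pda (convSum p₁ p₂) e = pda p₁ e + pda p₂ e - pda p₁ e * pda p₂ e ∧
    pda (convSum p₁ p₂) e ≤ pda p₁ e + pda p₂ e := by
  have h_mass : ∑ m ∈ (convSum p₁ p₂).support, convSum p₁ p₂ m = 1 := by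
    rw [sum_convSum, hp₁1, hp₂1, one_mul]
  have h_mul : 1 - pda (convSum p₁ p₂) e = (1 - pda p₁ e) * (1 - pda p₂ e) := by
    rw [one_sub_pda h_mass, one_sub_pda hp₁1, one_sub_pda hp₂1]
    exact expect_convSum_of_map_add (fun m₁ m₂ => one_sub_dda_add m₁ m₂ e) p₁ p₂
  have h_eq : pda (convSum p₁ p₂) e = pda p₁ e + pda p₂ e - pda p₁ e * pda p₂ e := by
    linear_combination -h_mul
  refine ⟨h_eq, h_eq ▸ sub_le_self _ (mul_nonneg ?_ ?_)⟩
  · exact pda_nonneg hp₁0 he0 fun x => (he1 x).le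
  · exact pda_nonneg hp₂0 he0 fun x => (he1 x).le
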